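/- For every N ≥ 2, Σ_{n=2}^{N} W((s^{(2)}_n − 1)/2) = (s^{(2)}_N − 1)/2. -/

import Mathlib

/-!
Write `m = m₂`, so that `(s⁽²⁾ₙ - 1) / 2 = m (n - 1)` and the claim telescopes once we know
`W (m (k + 1)) = m (k + 1) - m k`. Let `O x` be the number formed by the odd-position bits of `x`;
then `W y = 1 + O (y - 1)`. Since `m (2j) = 4 m j` and `m (2j + 1) = 4 m j + 1`, no value of `m`
has an odd-position bit, so for `k = 2j` both sides equal `1`. For `k = 2j + 1`, with
`x = m (j + 1) > 0`, the identity `O (4x - 1) = 2 + 4 O (x - 1)` reduces the claim to the one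
for `k = j`.
-/

/-- Moser function `m_r(n)`: reinterpret the base-`r` digits of `n` as base-`r²` digits,
i.e. `m_r(n) = Σ_i ν_i r^(2i)` where `n = Σ_i ν_i r^i` is the base-`r` expansion. -/
def moser (r n : ℕ) : ℕ := Nat.ofDigits (r ^ 2) (Nat.digits r n)

/-- `s^(r)_n = r · m_r(n−1) + 1` for `n ≥ 1`. -/
def moserS (r n : ℕ) : ℕ := r * moser r (n - 1) + 1

/-- The `i`-th base-`r` digit of `n` (0 if beyond the expansion). -/
def dig (r n i : ℕ) : ℕ := (Nat.digits r n).getD i 0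

/-- Josephus–Groër survivor function: with `M = N` if `N` is odd, `M = N − 1` otherwise,
and `M = Σ_j b_j 2^j` the binary expansion, `W(N) = 1 + Σ_{j odd} b_j 2^j`. -/
def W (N : ℕ) : ℕ :=
  let M := if N % 2 = 1 then N else N - 1
  1 + ((((Nat.digits 2 M).zipIdx.map Prod.swap).filter (fun p => p.1 % 2 = 1)).map (fun p => p.2 * 2 ^ p.1)).sum

/-- `k` is the bit position of the head of `l`. -/
def oddBitsFrom (k : ℕ) (l : List ℕ) : ℕ :=
  ((((l.zipIdx k).map Prod.swap).filter (fun p => p.1 % 2 = 1)).map (fun p => p.2 * 2 ^ p.1)).sum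

def oddBits (n : ℕ) : ℕ := oddBitsFrom 0 (Nat.digits 2 n)

lemma W_eq_one_add_oddBits (N : ℕ) :
    W N = 1 + oddBits (if N % 2 = 1 then N else N - 1) := rfl

lemma oddBitsFrom_cons (k a : ℕ) (l : List ℕ) :
    oddBitsFrom k (a :: l) = (if k % 2 = 1 then a * 2 ^ k else 0) + oddBitsFrom (k + 1) l := by
  simp only [oddBitsFrom, List.zipIdx_cons, List.map_cons, Prod.swap, List.filter_cons]
  split <;> simp_all

lemma oddBitsFrom_add_two (k : ℕ) (l : List ℕ) :
    oddBitsFrom (k + 2) l = 4 * oddBitsFrom k l := by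
  induction l generalizing k with
  | nil => rfl
  | cons a l ih =>
    rw [oddBitsFrom_cons, oddBitsFrom_cons, show k + 2 + 1 = k + 1 + 2 from rfl, ih,
      show (k + 2) % 2 = k % 2 by omega, pow_add]
    split <;> ring

lemma oddBits_eq (n : ℕ) : oddBits n = 2 * (n / 2 % 2) + 4 * oddBits (n / 4) := by
  rcases Nat.lt_or_ge n 2 with h | h
  · interval_cases n <;> rfl
  · rw [oddBits, Nat.digits_def' one_lt_two (by omega), Nat.digits_def' one_lt_two (by omega),
      oddBitsFrom_cons, oddBitsFrom_cons, oddBitsFrom_add_two, Nat.div_div_eq_div_mul]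
    simp [oddBits, mul_comm]

lemma oddBits_four_mul (x : ℕ) : oddBits (4 * x) = 4 * oddBits x := by
  rw [oddBits_eq]; simp [show 4 * x / 2 = 2 * x by omega]

lemma oddBits_sub_one_of_mod_two_eq_one {y : ℕ} (hy : y % 2 = 1) :
    oddBits (y - 1) = oddBits y := by
  rw [oddBits_eq, oddBits_eq y, show (y - 1) / 2 = y / 2 by omega,
    show (y - 1) / 4 = y / 4 by omega]

lemma oddBits_four_mul_sub_one {x : ℕ} (hx : 0 < x) :
    oddBits (4 * x - 1) = 2 + 4 * oddBits (x - 1) := by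
  rw [oddBits_eq]
  congr 3 <;> omega

lemma W_eq_one_add_oddBits_pred (y : ℕ) : W y = 1 + oddBits (y - 1) := by
  rw [W_eq_one_add_oddBits]
  split_ifs with hy
  · rw [oddBits_sub_one_of_mod_two_eq_one hy]
  · rfl

lemma moser_zero (r : ℕ) : moser r 0 = 0 := by simp [moser]

section Moser

variable {r : ℕ}

lemma moser_add_mul (hr : 1 < r) {d : ℕ} (hd : d < r) (m : ℕ) :
    moser r (d + r * m) = d + r ^ 2 * moser r m := by
  by_cases h : d = 0 ∧ m = 0
  · simp [h.1, h.2, moser_zero]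
  · rw [not_and_or] at h
    rw [moser, Nat.digits_add r hr d m hd h, Nat.ofDigits_cons, moser]

lemma moser_eq (hr : 1 < r) (n : ℕ) : moser r n = n % r + r ^ 2 * moser r (n / r) := by
  conv_lhs => rw [← Nat.mod_add_div n r]
  exact moser_add_mul hr (Nat.mod_lt n (by omega)) _

lemma self_le_moser (hr : 1 < r) (n : ℕ) : n ≤ moser r n := by
  induction n using Nat.strong_induction_on with
  | _ n ih =>
    rcases n.eq_zero_or_pos with rfl | hn
    · exact Nat.zero_le _
    have hq := ih (n / r) (Nat.div_lt_self hn hr)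
    calc n = n % r + r * (n / r) := (Nat.mod_add_div n r).symm
      _ ≤ n % r + r ^ 2 * moser r (n / r) :=
          Nat.add_le_add_left (Nat.mul_le_mul (Nat.le_self_pow two_ne_zero r) hq) _
      _ = moser r n := (moser_eq hr n).symm

lemma moserS_sub_one_div (hr : 0 < r) (n : ℕ) : (moserS r n - 1) / r = moser r (n - 1) := by
  simp [moserS, Nat.mul_div_cancel_left _ hr]

end Moser

lemma moser_two_mul (m : ℕ) : moser 2 (2 * m) = 4 * moser 2 m := by
  simpa using moser_add_mul one_lt_two two_pos m

lemma moser_two_mul_add_one (m : ℕ) : moser 2 (2 * m + 1) = 4 * moser 2 m + 1 := by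
  rw [add_comm, moser_add_mul one_lt_two one_lt_two]
  ring

lemma oddBits_moser_two (n : ℕ) : oddBits (moser 2 n) = 0 := by
  induction n using Nat.evenOddRec with
  | h0 => rfl
  | h_even m ih => rw [moser_two_mul, oddBits_four_mul, ih]
  | h_odd m ih =>
    rw [moser_two_mul_add_one, ← oddBits_sub_one_of_mod_two_eq_one (by omega), Nat.add_sub_cancel,
      oddBits_four_mul, ih]

lemma moser_two_add_W (k : ℕ) : moser 2 k + W (moser 2 (k + 1)) = moser 2 (k + 1) := by
  induction k using Nat.evenOddRec with
  | h0 => rfl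
  | h_even m _ =>
    rw [W_eq_one_add_oddBits_pred, moser_two_mul_add_one, moser_two_mul, Nat.add_sub_cancel,
      ← moser_two_mul, oddBits_moser_two]
  | h_odd m ih =>
    have hpos : 0 < moser 2 (m + 1) := (self_le_moser one_lt_two (m + 1)).trans_lt' m.succ_pos
    rw [W_eq_one_add_oddBits_pred] at ih ⊢
    rw [show 2 * m + 1 + 1 = 2 * (m + 1) by ring, moser_two_mul, moser_two_mul_add_one,
      oddBits_four_mul_sub_one hpos]
    omega

lemma sum_W_moser_two (N : ℕ) :
    ∑ n ∈ Finset.Icc 2 N, W (moser 2 (n - 1)) = moser 2 (N - 1) := by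
  induction N with
  | zero => rfl
  | succ N ih =>
    rcases N with _ | N
    · rfl
    rw [Finset.sum_Icc_succ_top (by omega), ih]
    exact moser_two_add_W N

theorem sum_W_moserS_general (N : ℕ) :
    ∑ n ∈ Finset.Icc 2 N, W ((moserS 2 n - 1) / 2) = (moserS 2 N - 1) / 2 := by
  simp only [moserS_sub_one_div two_pos]
  exact sum_W_moser_two N

/-- For every `N ≥ 2`, `Σ_{n=2}^{N} W((s^(2)_n − 1)/2) = (s^(2)_N − 1)/2`. -/
theorem sum_W_moserS (N : ℕ) (hN : 2 ≤ N) :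
    ∑ n ∈ Finset.Icc 2 N, W ((moserS 2 n - 1) / 2) = (moserS 2 N - 1) / 2 :=
  sum_W_moserS_general N
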